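/- arXiv:2601.04338 — 2 statements merged into one kernel-verified Lean document; each statement's English description precedes it below -/
import Mathlib

section
/- In any AG-group G, (a*(b*c))*d = (a*(d*c))*b for all a,b,c,d in G. -/
class AGGroup (G : Type*) extends Mul G, Inv G where
  e : G
  left_id : ∀ a : G, e * a = a
  inv_mul : ∀ a : G, a⁻¹ * a = e
  mul_inv : ∀ a : G, a * a⁻¹ = e
  left_invertive : ∀ x y z : G, (x * y) * z = (z * y) * x

def AGPar {G : Type*} [AGGroup G] (a b c d : G) : Prop :=
  ∃ p q : G, p * a = q * b ∧ p * d = q * c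

lemma ag_medial {G : Type*} [AGGroup G] (a b c d : G) :
    (a * b) * (c * d) = (a * c) * (b * d) := by
  rw [AGGroup.left_invertive a b (c*d), AGGroup.left_invertive c d b,
    AGGroup.left_invertive (b*d) c a]

lemma ag_swap {G : Type*} [AGGroup G] (a b c : G) :
    a * (b * c) = b * (a * c) := by
  have h := ag_medial (AGGroup.e (G:=G)) a b c
  rwa [AGGroup.left_id, AGGroup.left_id] at h

theorem stmt10 {G : Type*} [AGGroup G] (a b c d : G) :
    (a * (b * c)) * d = (a * (d * c)) * b := by
  rw [AGGroup.left_invertive a (b*c) d, ag_swap d b c, AGGroup.left_invertive b (d*c) a]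
end

section
/- Let G be an AG-group and a,b,c,d in G. Then Par(a,b,c,d) holds if and only if there exist x,y in G such that x*b = a, b*y = c, and b*(x*y) = d. -/
namespace AGGroup

variable {G : Type*} [AGGroup G]

theorem medial (a b c d : G) : (a * b) * (c * d) = (a * c) * (b * d) := by
  rw [left_invertive a b (c * d), left_invertive c d b, left_invertive (b * d) c a]

theorem swap (a b c : G) : a * (b * c) = b * (a * c) := by
  have h1 : a * (b * c) = (e * a) * (b * c) := by rw [left_id]
  rw [h1, medial, left_id]

theorem paramedial (a b c d : G) : (a * b) * (c * d) = (d * b) * (c * a) := by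
  rw [swap (a * b) c d, left_invertive a b d, swap c ((d * b)) a]

theorem rcancel_eq (a b : G) : (a * b) * b⁻¹ = a := by
  rw [left_invertive, inv_mul, left_id]

theorem div_mul (a b : G) : (a * b⁻¹) * b = a := by
  rw [left_invertive, mul_inv, left_id]

theorem lrecover (p u : G) : ((p * u) * e) * p⁻¹ = u := by
  rw [left_invertive (p * u) e p⁻¹, medial, inv_mul, left_id, left_id]

theorem left_cancel {p u v : G} (h : p * u = p * v) : u = v := by
  have := lrecover p u
  rw [h, lrecover] at this
  exact this.symm

theorem bdiv (b c : G) : b * ((c * e) * b⁻¹) = c := by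
  have h1 : b * ((c * e) * b⁻¹) = (e * b) * ((c * e) * b⁻¹) := by rw [left_id]
  rw [h1, medial, left_id, mul_inv, left_invertive c e e, left_id, left_id]

end AGGroup

open AGGroup

theorem stmt12 {G : Type*} [AGGroup G] (a b c d : G) :
    AGPar a b c d ↔ ∃ x y : G, x * b = a ∧ b * y = c ∧ b * (x * y) = d := by
  constructor
  · rintro ⟨p, q, h1, h2⟩
    refine ⟨a * b⁻¹, (c * e) * b⁻¹, div_mul a b, bdiv b c, ?_⟩
    rw [swap b (a * b⁻¹), bdiv]
    apply left_cancel (p := p)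
    calc p * ((a * b⁻¹) * c) = (a * b⁻¹) * (p * c) := swap _ _ _
      _ = (a * p) * (b⁻¹ * c) := medial _ _ _ _
      _ = (c * p) * (b⁻¹ * a) := paramedial _ _ _ _
      _ = (c * b⁻¹) * (p * a) := medial _ _ _ _
      _ = (c * b⁻¹) * (q * b) := by rw [h1]
      _ = ((q * b) * b⁻¹) * c := left_invertive _ _ _
      _ = q * c := by rw [rcancel_eq]
      _ = p * d := h2.symm
  · rintro ⟨x, y, hx, hy, hd⟩
    refine ⟨e, x, by rw [left_id, hx], ?_⟩
    rw [left_id, ← hd, swap b x y, hy]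
end
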